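/- Let A = {0,1}, k = 2k'+1 odd, n ≥ k+1, n0 = n−k+1, and J = {n0, n0+2, …, n−2, n}. For every j ∈ J, the sequence of length-j suffixes of the terms of γ^{n,k} is 2^{j+1}-periodic. More precisely, for every j ∈ J with j ≠ n and every i ∈ [0, 2^n−1], writing μ = i mod 2^{j+1}, the suffix of length j of γ^{n,k}_{[i]} equals γ^{j, k−n+j}_{[μ]} if 0 ≤ μ ≤ 2^j−1, and equals ρ^{j, k−n+j}_{[μ−2^j]} if 2^j ≤ μ ≤ 2^{j+1}−1. -/

import Mathlib

/-- Hamming distance between two words (lists) of the same length: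
the number of positions in which they differ. -/
def hammingL {α : Type*} [DecidableEq α] (w w' : List α) : ℕ :=
  ((w.zip w').filter fun q => decide (q.1 ≠ q.2)).length

/-- `w` (restricted to indices `< N`) is a `σ_k`-Gray cycle over `X`:
its terms are pairwise distinct and enumerate `X` (a bijection from `[0, N-1]` onto `X`),
two consecutive terms have the same length and Hamming distance exactly `k`, and so do
the first and the last term. -/
def IsGrayCycleOn {α : Type*} [DecidableEq α] (k N : ℕ) (w : ℕ → List α)
    (X : Set (List α)) : Prop :=
  Set.BijOn w (Set.Iio N) X ∧
  (∀ i, 1 ≤ i → i < N →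
    (w (i - 1)).length = (w i).length ∧ hammingL (w (i - 1)) (w i) = k) ∧
  (0 < N → (w (N - 1)).length = (w 0).length ∧ hammingL (w (N - 1)) (w 0) = k)

/-- The bit complement `θ : 0 ↔ 1` on the binary alphabet `{0,1}`. -/
def cpl (x : Fin 2) : Fin 2 := x + 1

/-- The bit complement extended letterwise to binary words. -/
def cplW (w : List (Fin 2)) : List (Fin 2) := w.map cpl

/-- The reflected binary Gray code `g^{m,1}` over words of length `m`:
`g^{0,1} = (ε)` and `g^{m+1,1} = (0·g^{m,1}, 1·(g^{m,1})^R)`. -/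
def binGray : ℕ → List (List (Fin 2))
  | 0 => [[]]
  | m + 1 =>
      (binGray m).map (fun w => 0 :: w) ++ (binGray m).reverse.map (fun w => 1 :: w)

/-- The sequence `γ^{n0,1}`: `γ^{n0,1}_{[0]} = g^{n0,1}_{[0]}` and
`γ^{n0,1}_{[i]} = g^{n0,1}_{[2^{n0} - i]}` for `1 ≤ i ≤ 2^{n0} - 1`. -/
def gamma1 (n0 i : ℕ) : List (Fin 2) :=
  if i = 0 then (binGray n0).getD 0 [] else (binGray n0).getD (2 ^ n0 - i) []

/-- The sequence `ρ^{n0,1}`: `ρ^{n0,1}_{[0]} = g^{n0,1}_{[2^{n0}-1]}` and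
`ρ^{n0,1}_{[i]} = g^{n0,1}_{[i-1]}` for `1 ≤ i ≤ 2^{n0} - 1`. -/
def rho1 (n0 i : ℕ) : List (Fin 2) :=
  if i = 0 then (binGray n0).getD (2 ^ n0 - 1) [] else (binGray n0).getD (i - 1) []

/-- `grSeq n0 true t i` (resp. `grSeq n0 false t i`) is the term of index `i` of the
sequence `γ^{n0+2t, 2t+1}` (resp. `ρ^{n0+2t, 2t+1}`), built inductively: the base cases
are `γ^{n0,1}` and `ρ^{n0,1}`, and, writing `i = q·2^m + r` with `m = n0 + 2t` and
`r < 2^m`, `γ^{m+2, (2t+1)+2}_{[i]}` is `θ^r(00)·γ^{m,2t+1}_{[r]}`, `θ^r(01)·ρ^{m,2t+1}_{[r]}`,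
`θ^r(11)·γ^{m,2t+1}_{[r]}`, `θ^r(10)·ρ^{m,2t+1}_{[r]}` according to `q = 0, 1, 2, 3`, and
`ρ^{m+2, (2t+1)+2}_{[i]}` is `θ^r(10)·γ^{m,2t+1}_{[r]}`, `θ^r(11)·ρ^{m,2t+1}_{[r]}`,
`θ^r(01)·γ^{m,2t+1}_{[r]}`, `θ^r(00)·ρ^{m,2t+1}_{[r]}` according to `q = 0, 1, 2, 3`. -/
def grSeq (n0 : ℕ) : Bool → ℕ → ℕ → List (Fin 2)
  | b, 0, i => if b then gamma1 n0 i else rho1 n0 i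
  | b, t + 1, i =>
      cplW^[i % 2 ^ (n0 + 2 * t)]
        (if b then
          (if i / 2 ^ (n0 + 2 * t) = 0 then [0, 0]
           else if i / 2 ^ (n0 + 2 * t) = 1 then [0, 1]
           else if i / 2 ^ (n0 + 2 * t) = 2 then [1, 1] else [1, 0])
         else
          (if i / 2 ^ (n0 + 2 * t) = 0 then [1, 0]
           else if i / 2 ^ (n0 + 2 * t) = 1 then [1, 1]
           else if i / 2 ^ (n0 + 2 * t) = 2 then [0, 1] else [0, 0])) ++
        grSeq n0 (i / 2 ^ (n0 + 2 * t) % 2 == 0) t (i % 2 ^ (n0 + 2 * t))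

/-- For odd `k` and `n ≥ k + 1`, `gammaNK n k i` is the term `γ^{n,k}_{[i]}`
(here `n0 = n - k + 1` and `k = 2·(k/2) + 1`). -/
def gammaNK (n k i : ℕ) : List (Fin 2) := grSeq (n + 1 - k) true (k / 2) i

/-- For odd `k` and `n ≥ k + 1`, `rhoNK n k i` is the term `ρ^{n,k}_{[i]}`. -/
def rhoNK (n k i : ℕ) : List (Fin 2) := grSeq (n + 1 - k) false (k / 2) i


/-!
Stripping the two-letter prefix of `γ^{m+2,k+2}_{[i]}` or `ρ^{m+2,k+2}_{[i]}` leaves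
`γ^{m,k}_{[r]}` or `ρ^{m,k}_{[r]}` with `r = i mod 2^m`, the choice being made by the parity of
`i / 2^m`; that is, it leaves the term of index `i mod 2^{m+1}` of the concatenation
`γ^{m,k} ρ^{m,k}`. Iterating, and using that `2^{j+1}` divides `2^m` for `j < m`, the length-`j`
suffix of `γ^{n,k}_{[i]}` is the term of index `i mod 2^{j+1}` of `γ^{j,·} ρ^{j,·}`.
-/

/-- The term of index `μ < 2^{m+1}` of the concatenation `γ^{m,2t+1} ρ^{m,2t+1}`,
where `m = n0 + 2t`. -/
def gammaRho (n0 t μ : ℕ) : List (Fin 2) :=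
  if μ < 2 ^ (n0 + 2 * t) then grSeq n0 true t μ
  else grSeq n0 false t (μ - 2 ^ (n0 + 2 * t))

lemma cplW_iterate_length (r : ℕ) (w : List (Fin 2)) : (cplW^[r] w).length = w.length := by
  induction r generalizing w with
  | zero => rfl
  | succ r ih => simp [Function.iterate_succ_apply, ih, cplW]

lemma grSeq_succ_drop_two (n0 t : ℕ) (b : Bool) (i : ℕ) :
    (grSeq n0 b (t + 1) i).drop 2 =
      grSeq n0 (i / 2 ^ (n0 + 2 * t) % 2 == 0) t (i % 2 ^ (n0 + 2 * t)) := by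
  rw [grSeq]
  apply List.drop_left'
  rw [cplW_iterate_length]
  split_ifs <;> rfl

lemma grSeq_succ_drop_two_eq_gammaRho (n0 t : ℕ) (b : Bool) (i : ℕ) :
    (grSeq n0 b (t + 1) i).drop 2 = gammaRho n0 t (i % 2 ^ (n0 + 2 * t + 1)) := by
  rw [grSeq_succ_drop_two, gammaRho, pow_succ, Nat.mod_mul]
  have hlt : i % 2 ^ (n0 + 2 * t) < 2 ^ (n0 + 2 * t) := Nat.mod_lt _ (by positivity)
  rcases Nat.mod_two_eq_zero_or_one (i / 2 ^ (n0 + 2 * t)) with hq | hq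
  · simp [hq, hlt]
  · simp [hq]

lemma grSeq_drop_eq_gammaRho (n0 s d : ℕ) (b : Bool) (i : ℕ) :
    (grSeq n0 b (s + (d + 1)) i).drop (2 * (d + 1)) =
      gammaRho n0 s (i % 2 ^ (n0 + 2 * s + 1)) := by
  induction d generalizing b i with
  | zero => exact grSeq_succ_drop_two_eq_gammaRho n0 s b i
  | succ d ih =>
    have hdvd : 2 ^ (n0 + 2 * s + 1) ∣ 2 ^ (n0 + 2 * (s + (d + 1))) :=
      pow_dvd_pow 2 (by omega)
    rw [show 2 * (d + 1 + 1) = 2 + 2 * (d + 1) by ring, ← List.drop_drop,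
      ← add_assoc s, grSeq_succ_drop_two, ih, Nat.mod_mod_of_dvd _ hdvd]

lemma gammaNK_eq_grSeq (m t : ℕ) : gammaNK (m + 2 * t) (2 * t + 1) = grSeq m true t := by
  funext i
  rw [gammaNK, show m + 2 * t + 1 - (2 * t + 1) = m by omega,
    show (2 * t + 1) / 2 = t by omega]

lemma rhoNK_eq_grSeq (m t : ℕ) : rhoNK (m + 2 * t) (2 * t + 1) = grSeq m false t := by
  funext i
  rw [rhoNK, show m + 2 * t + 1 - (2 * t + 1) = m by omega,
    show (2 * t + 1) / 2 = t by omega]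

theorem statement8_general (n k : ℕ) (hk : Odd k) (hn : k + 1 ≤ n) :
    ∀ j, n - k + 1 ≤ j → j ≤ n → (j - (n - k + 1)) % 2 = 0 →
      (∀ i, i + 2 ^ (j + 1) ≤ 2 ^ n - 1 →
        (gammaNK n k (i + 2 ^ (j + 1))).drop (n - j) = (gammaNK n k i).drop (n - j)) ∧
      (j ≠ n → ∀ i < 2 ^ n,
        (i % 2 ^ (j + 1) < 2 ^ j →
          (gammaNK n k i).drop (n - j) = gammaNK j (k + j - n) (i % 2 ^ (j + 1))) ∧
        (2 ^ j ≤ i % 2 ^ (j + 1) →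
          (gammaNK n k i).drop (n - j) =
            rhoNK j (k + j - n) (i % 2 ^ (j + 1) - 2 ^ j))) := by
  obtain ⟨t, rfl⟩ := hk
  obtain ⟨m, rfl⟩ : ∃ m, n = m + 2 * t := ⟨n - 2 * t, by omega⟩
  intro j hj hjn hpar
  obtain ⟨s, rfl⟩ : ∃ s, j = m + 2 * s := ⟨(j - m) / 2, by omega⟩
  rcases Nat.eq_or_lt_of_le (show s ≤ t by omega) with rfl | hst
  · -- `j = n`: the shift `2^{n+1}` exceeds the whole index range `[0, 2^n - 1]`
    refine ⟨fun i hi => absurd hi ?_, fun h => absurd rfl h⟩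
    have := Nat.one_le_two_pow (n := m + 2 * s)
    rw [pow_succ]
    omega
  obtain ⟨d, rfl⟩ : ∃ d, t = s + (d + 1) := ⟨t - s - 1, by omega⟩
  have hdrop : m + 2 * (s + (d + 1)) - (m + 2 * s) = 2 * (d + 1) := by omega
  have hlevel : 2 * (s + (d + 1)) + 1 + (m + 2 * s) - (m + 2 * (s + (d + 1))) = 2 * s + 1 := by
    omega
  rw [gammaNK_eq_grSeq, hdrop, hlevel, gammaNK_eq_grSeq, rhoNK_eq_grSeq]
  refine ⟨fun i _ => ?_, fun _ i _ => ⟨fun hμ => ?_, fun hμ => ?_⟩⟩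
  · rw [grSeq_drop_eq_gammaRho, grSeq_drop_eq_gammaRho, Nat.add_mod_right]
  · rw [grSeq_drop_eq_gammaRho, gammaRho, if_pos hμ]
  · rw [grSeq_drop_eq_gammaRho, gammaRho, if_neg (by omega)]

/-- Let `k` be odd, `n ≥ k + 1`, `n0 = n - k + 1`, and `J = {n0, n0+2, …, n-2, n}`
(the `j` with `n0 ≤ j ≤ n` and `j ≡ n0 (mod 2)`). For every `j ∈ J` the sequence of
length-`j` suffixes of the terms of `γ^{n,k}` is `2^{j+1}`-periodic; more precisely, for
`j ∈ J` with `j ≠ n` and `i ∈ [0, 2^n - 1]`, writing `μ = i mod 2^{j+1}`, the suffix of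
length `j` of `γ^{n,k}_{[i]}` is `γ^{j,k-n+j}_{[μ]}` if `μ < 2^j`, and
`ρ^{j,k-n+j}_{[μ - 2^j]}` if `2^j ≤ μ < 2^{j+1}`. -/
theorem statement8 (n k : ℕ) (hk1 : 1 ≤ k) (hk : Odd k) (hn : k + 1 ≤ n) :
    ∀ j, n - k + 1 ≤ j → j ≤ n → (j - (n - k + 1)) % 2 = 0 →
      (∀ i, i + 2 ^ (j + 1) ≤ 2 ^ n - 1 →
        (gammaNK n k (i + 2 ^ (j + 1))).drop (n - j) = (gammaNK n k i).drop (n - j)) ∧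
      (j ≠ n → ∀ i < 2 ^ n,
        (i % 2 ^ (j + 1) < 2 ^ j →
          (gammaNK n k i).drop (n - j) = gammaNK j (k + j - n) (i % 2 ^ (j + 1))) ∧
        (2 ^ j ≤ i % 2 ^ (j + 1) →
          (gammaNK n k i).drop (n - j) =
            rhoNK j (k + j - n) (i % 2 ^ (j + 1) - 2 ^ j))) :=
  statement8_general n k hk hn
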